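/- arXiv:1402.3000 — 3 statements merged into one kernel-verified Lean document; each statement's English description precedes it below -/
import Mathlib

section
/- Let A be an n×n integer matrix all of whose eigenvalues have modulus strictly greater than one, and let D ⊂ ℤⁿ be a complete set of residue class representatives of ℤⁿ/Aℤⁿ. Then there exists a unique nonempty compact set T ⊂ ℝⁿ satisfying A·T = T + D (i.e., the image of T under A equals the union of translates T + d for d ∈ D). -/
/-!
Write `C ⊂ ℝⁿ` for the image of `D`. The equation `A·T = T + D` says that `T` is a fixed point of
the operator `S ↦ A⁻¹(S + C)` on nonempty compact sets, and `C` is finite because `D` injects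
into `(ℤ / det A)ⁿ`. The `k`-th iterate of this operator is `S ↦ A⁻ᵏ S + V` for a set `V` that
does not depend on `S`, so it is `‖A⁻ᵏ‖`-Lipschitz for the Hausdorff distance. All complex
eigenvalues of `A⁻¹` lie in the open unit disc, so by Gelfand's formula `‖A⁻ᵏ‖ < 1` for some `k`,
and Banach's fixed point theorem on the complete space of nonempty compact sets concludes.
-/

open Matrix Set

open Metric Pointwise TopologicalSpace Filter
open scoped NNReal ENNReal

lemma LipschitzWith.infEDist_image_le {α β : Type*} [PseudoEMetricSpace α] [PseudoEMetricSpace β]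
    {f : α → β} {c : ℝ≥0} (hf : LipschitzWith c f) (x : α) {t : Set α} (ht : t.Nonempty) :
    infEDist (f x) (f '' t) ≤ c * infEDist x t := by
  rcases eq_or_ne c 0 with rfl | hc
  · obtain ⟨y, hy⟩ := ht
    simpa using (infEDist_le_edist_of_mem (mem_image_of_mem f hy)).trans (hf x y)
  · rw [infEDist, infEDist, ENNReal.mul_iInf_of_ne (by simpa) ENNReal.coe_ne_top]
    refine le_iInf fun y => ?_
    rw [ENNReal.mul_iInf_of_ne (by simpa) ENNReal.coe_ne_top]
    exact le_iInf fun hy => (infEDist_le_edist_of_mem (mem_image_of_mem f hy)).trans (hf x y)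

lemma LipschitzWith.hausdorffEDist_image_le {α β : Type*} [PseudoEMetricSpace α]
    [PseudoEMetricSpace β] {f : α → β} {c : ℝ≥0} (hf : LipschitzWith c f) {s t : Set α}
    (hs : s.Nonempty) (ht : t.Nonempty) :
    hausdorffEDist (f '' s) (f '' t) ≤ c * hausdorffEDist s t := by
  refine hausdorffEDist_le_of_infEDist ?_ ?_ <;> rintro _ ⟨x, hx, rfl⟩
  · exact (hf.infEDist_image_le x ht).trans (by gcongr; exact infEDist_le_hausdorffEDist_of_mem hx)
  · refine (hf.infEDist_image_le x hs).trans ?_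
    rw [hausdorffEDist_comm]
    gcongr
    exact infEDist_le_hausdorffEDist_of_mem hx

lemma hausdorffEDist_add_right_le {E : Type*} [SeminormedAddCommGroup E] (s t V : Set E) :
    hausdorffEDist (s + V) (t + V) ≤ hausdorffEDist s t := by
  rw [← iUnion_add_right_image, ← iUnion_add_right_image]
  refine hausdorffEDist_iUnion_le.trans (iSup_le fun v => hausdorffEDist_iUnion_le.trans ?_)
  exact iSup_le fun _ => (hausdorffEDist_image (isometry_add_right v)).le

lemma ContractingWith.existsUnique_isFixedPt_of_iterate {α : Type*} [MetricSpace α]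
    [Nonempty α] [CompleteSpace α] {K : ℝ≥0} {f : α → α} {k : ℕ}
    (hf : ContractingWith K f^[k]) : ∃! x, Function.IsFixedPt f x :=
  ⟨_, hf.isFixedPt_fixedPoint_iterate, fun _ hx => hf.fixedPoint_unique (hx.iterate k)⟩

namespace AddMonoidHom

variable {E : Type*} [NormedAddCommGroup E] (L : E →+ E) (C : Set E)

lemma exists_iterate_image_add_eq (m : ℕ) :
    ∃ V : Set E, ∀ S, (fun S => L '' (S + C))^[m] S = (⇑L)^[m] '' S + V := by
  induction m with
  | zero => exact ⟨0, fun S => by simp⟩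
  | succ m ih =>
    obtain ⟨V, hV⟩ := ih
    refine ⟨L '' (V + C), fun S => ?_⟩
    rw [Function.iterate_succ_apply', hV, add_assoc, image_add, image_image,
      Function.iterate_succ']
    rfl

theorem existsUnique_nonempty_isCompact_image_add_eq [CompleteSpace E] (hL : Continuous L)
    (hC : C.Finite) (hC₀ : C.Nonempty) {K : ℝ≥0} (hK : K < 1) {k : ℕ}
    (hk : LipschitzWith K (⇑L)^[k]) :
    ∃! T : Set E, T.Nonempty ∧ IsCompact T ∧ L '' (T + C) = T := by
  let H : NonemptyCompacts E → NonemptyCompacts E := fun S =>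
    ⟨⟨L '' (S + C), (S.isCompact.add hC.isCompact).image hL⟩, (S.nonempty.add hC₀).image L⟩
  have hH : Function.Semiconj ((↑) : NonemptyCompacts E → Set E) H (fun S => L '' (S + C)) :=
    fun _ => rfl
  have hcontr : ContractingWith K H^[k] := by
    refine ⟨hK, fun S S' => ?_⟩
    obtain ⟨V, hV⟩ := L.exists_iterate_image_add_eq C k
    change hausdorffEDist (H^[k] S : Set E) (H^[k] S') ≤ K * hausdorffEDist (S : Set E) S'
    rw [(hH.iterate_right k).eq, (hH.iterate_right k).eq, hV, hV]
    exact (hausdorffEDist_add_right_le _ _ V).trans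
      (hk.hausdorffEDist_image_le S.nonempty S'.nonempty)
  have : Nonempty (NonemptyCompacts E) := ⟨{0}⟩
  obtain ⟨T, hT, huniq⟩ := hcontr.existsUnique_isFixedPt_of_iterate
  refine ⟨T, ⟨T.nonempty, T.isCompact, congrArg ((↑) : NonemptyCompacts E → Set E) hT⟩, ?_⟩
  rintro S ⟨hne, hcpt, hS⟩
  exact congrArg ((↑) : NonemptyCompacts E → Set E)
    (huniq ⟨⟨S, hcpt⟩, hne⟩ (NonemptyCompacts.ext hS))

end AddMonoidHom

lemma spectrum.exists_pow_nnnorm_lt_one {A : Type*} [NormedRing A] [NormedAlgebra ℂ A]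
    [CompleteSpace A] (a : A) (h : ∀ z ∈ spectrum ℂ a, ‖z‖₊ < 1) : ∃ k, ‖a ^ k‖₊ < 1 := by
  rcases subsingleton_or_nontrivial A with hA | hA
  · exact ⟨0, by rw [Subsingleton.elim (a ^ 0) 0]; simp⟩
  have hρ : spectralRadius ℂ a < 1 := by
    exact_mod_cast spectrum.spectralRadius_lt_of_forall_lt a h
  have hlim := (pow_nnnorm_pow_one_div_tendsto_nhds_spectralRadius a).eventually_lt_const hρ
  obtain ⟨k, hk, hk₀⟩ := (hlim.and (eventually_gt_atTop 0)).exists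
  refine ⟨k, ?_⟩
  by_contra! hge
  exact (ENNReal.one_le_rpow (by exact_mod_cast hge) (by positivity)).not_gt hk

attribute [local instance] Matrix.linftyOpNormedAddCommGroup Matrix.linftyOpNormedRing
  Matrix.linftyOpNormedAlgebra

namespace Matrix

variable {ι : Type*} [Fintype ι]

lemma linfty_opNNNorm_map_ofReal {m n : Type*} [Fintype m] [Fintype n] (M : Matrix m n ℝ) :
    ‖M.map (algebraMap ℝ ℂ)‖₊ = ‖M‖₊ := by
  simp [linfty_opNNNorm_def, Complex.nnnorm_real]

lemma lipschitzWith_mulVec {m n : Type*} [Fintype m] [Fintype n] (M : Matrix m n ℝ) :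
    LipschitzWith ‖M‖₊ (M *ᵥ ·) :=
  LipschitzWith.of_dist_le_mul fun x y => by
    simpa [dist_eq_norm, mulVec_sub] using linfty_opNorm_mulVec M (x - y)

def IsCompleteResidueSystem (A : Matrix ι ι ℤ) (D : Set (ι → ℤ)) : Prop :=
  ∀ z : ι → ℤ, ∃! d, d ∈ D ∧ ∃ y : ι → ℤ, z = d + A *ᵥ y

namespace IsCompleteResidueSystem

variable {A : Matrix ι ι ℤ} {D : Set (ι → ℤ)}

lemma nonempty (hD : A.IsCompleteResidueSystem D) : D.Nonempty :=
  let ⟨d, ⟨hd, _⟩, _⟩ := hD 0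
  ⟨d, hd⟩

lemma eq_of_eq_add_mulVec (hD : A.IsCompleteResidueSystem D) {d₁ d₂ y : ι → ℤ}
    (h₁ : d₁ ∈ D) (h₂ : d₂ ∈ D) (h : d₁ = d₂ + A *ᵥ y) : d₁ = d₂ :=
  (hD d₁).unique ⟨h₁, 0, by simp⟩ ⟨h₂, y, h⟩

lemma finite [DecidableEq ι] (hD : A.IsCompleteResidueSystem D) (hA : A.det ≠ 0) :
    D.Finite := by
  have : NeZero A.det.natAbs := ⟨Int.natAbs_ne_zero.mpr hA⟩
  refine Finite.of_finite_image (f := fun d i => (d i : ZMod A.det.natAbs)) (toFinite _) ?_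
  intro d₁ h₁ d₂ h₂ h
  have hdvd : ∀ i, A.det ∣ d₁ i - d₂ i := fun i =>
    Int.natAbs_dvd.mp ((ZMod.intCast_eq_intCast_iff_dvd_sub _ _ _).mp (congrFun h i).symm)
  choose w hw using hdvd
  refine hD.eq_of_eq_add_mulVec h₁ h₂ (y := A.adjugate *ᵥ w) ?_
  rw [mulVec_mulVec, mul_adjugate, smul_mulVec, one_mulVec]
  ext i
  simp [← hw]

end IsCompleteResidueSystem

variable [DecidableEq ι]

lemma map_nonsing_inv {α β : Type*} [CommRing α] [CommRing β] (f : α →+* β) {M : Matrix ι ι α}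
    (h : IsUnit M.det) : M⁻¹.map f = (M.map f)⁻¹ :=
  (inv_eq_right_inv (by
    rw [← Matrix.map_mul, mul_nonsing_inv M h, Matrix.map_one f f.map_zero f.map_one])).symm

lemma iterate_mulVec {α : Type*} [CommSemiring α] (M : Matrix ι ι α) (k : ℕ) :
    (M *ᵥ ·)^[k] = (M ^ k *ᵥ ·) := by
  induction k with
  | zero => ext; simp
  | succ k ih => ext v; rw [Function.iterate_succ_apply', ih, mulVec_mulVec, pow_succ']

lemma image_mulVec_eq_iff {α : Type*} [CommRing α] {M : Matrix ι ι α} (h : IsUnit M.det)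
    (S U : Set (ι → α)) : (M *ᵥ ·) '' S = U ↔ (M⁻¹ *ᵥ ·) '' U = S := by
  have hl : Function.LeftInverse (M⁻¹ *ᵥ ·) (M *ᵥ ·) := fun v => by
    simp [mulVec_mulVec, nonsing_inv_mul M h]
  have hr : Function.RightInverse (M⁻¹ *ᵥ ·) (M *ᵥ ·) := fun v => by
    simp [mulVec_mulVec, mul_nonsing_inv M h]
  constructor <;> rintro rfl
  · exact hl.image_image S
  · exact hr.image_image U

def IsExpanding (B : Matrix ι ι ℝ) : Prop :=
  ∀ μ ∈ spectrum ℂ (B.map (algebraMap ℝ ℂ)), 1 < ‖μ‖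

namespace IsExpanding

variable {B : Matrix ι ι ℝ}

lemma isUnit_map (hB : B.IsExpanding) : IsUnit (B.map (algebraMap ℝ ℂ)) := by
  by_contra h
  exact absurd (hB 0 ((spectrum.zero_mem_iff ℂ).mpr h)) (by simp)

lemma isUnit_det (hB : B.IsExpanding) : IsUnit B.det := by
  have h := (isUnit_iff_isUnit_det _).mp hB.isUnit_map
  rw [← RingHom.mapMatrix_apply, ← RingHom.map_det, isUnit_iff_ne_zero] at h
  exact isUnit_iff_ne_zero.mpr fun h0 => h (by simp [h0])

lemma exists_pow_inv_nnnorm_lt_one (hB : B.IsExpanding) : ∃ k, ‖B⁻¹ ^ k‖₊ < 1 := by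
  have : CompleteSpace (Matrix ι ι ℂ) := FiniteDimensional.complete ℂ _
  have hinv : ∀ z ∈ spectrum ℂ (B⁻¹.map (algebraMap ℝ ℂ)), ‖z‖₊ < 1 := by
    rw [map_nonsing_inv _ hB.isUnit_det, ← hB.isUnit_map.unit_spec, ← coe_units_inv,
      ← spectrum.map_inv]
    intro z hz
    have h1 := hB z⁻¹ hz
    rw [norm_inv, one_lt_inv_iff₀] at h1
    exact_mod_cast h1.2
  obtain ⟨k, hk⟩ := spectrum.exists_pow_nnnorm_lt_one _ hinv
  exact ⟨k, by rwa [← Matrix.map_pow, linfty_opNNNorm_map_ofReal] at hk⟩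

theorem existsUnique_nonempty_isCompact_image_mulVec_eq_add (hB : B.IsExpanding)
    {C : Set (ι → ℝ)} (hC : C.Finite) (hC₀ : C.Nonempty) :
    ∃! T : Set (ι → ℝ), T.Nonempty ∧ IsCompact T ∧ (B *ᵥ ·) '' T = T + C := by
  obtain ⟨k, hk⟩ := hB.exists_pow_inv_nnnorm_lt_one
  have hL : LipschitzWith ‖B⁻¹ ^ k‖₊ (B⁻¹.mulVecLin.toAddMonoidHom)^[k] := by
    rw [show ⇑B⁻¹.mulVecLin.toAddMonoidHom = (B⁻¹ *ᵥ ·) from rfl, iterate_mulVec]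
    exact lipschitzWith_mulVec _
  simp_rw [image_mulVec_eq_iff hB.isUnit_det]
  exact AddMonoidHom.existsUnique_nonempty_isCompact_image_add_eq _ C
    (lipschitzWith_mulVec B⁻¹).continuous hC hC₀ hk hL

end IsExpanding

end Matrix

/-- existence and uniqueness of the self-affine tile `T` with `A·T = T + D`. -/
theorem selfAffineTile_existsUnique (n : ℕ) (A : Matrix (Fin n) (Fin n) ℤ)
    (hexp : ∀ μ ∈ (A.map (Int.cast : ℤ → ℂ)).charpoly.roots, 1 < ‖μ‖)
    (D : Set (Fin n → ℤ))
    (hD : ∀ z : Fin n → ℤ, ∃! d, d ∈ D ∧ ∃ y : Fin n → ℤ, z = d + A.mulVec y) :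
    ∃! T : Set (Fin n → ℝ),
      T.Nonempty ∧ IsCompact T ∧
      (fun x => (A.map (Int.cast : ℤ → ℝ)).mulVec x) '' T
        = ⋃ d ∈ D, (fun x => x + fun i => ((d i : ℝ))) '' T := by
  set B : Matrix (Fin n) (Fin n) ℝ := A.map (Int.cast : ℤ → ℝ)
  have hAB : A.map (Int.cast : ℤ → ℂ) = B.map (algebraMap ℝ ℂ) := by ext; simp [B]
  have hB : B.IsExpanding := fun μ hμ => hexp μ <| by
    rw [hAB, Polynomial.mem_roots (charpoly_monic _).ne_zero, ← mem_spectrum_iff_isRoot_charpoly]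
    exact hμ
  have hA : A.det ≠ 0 := by
    have h := hB.isUnit_det
    rw [show B.det = (A.det : ℝ) from (RingHom.map_det (Int.castRingHom ℝ) A).symm,
      isUnit_iff_ne_zero] at h
    exact_mod_cast h
  have hD' : A.IsCompleteResidueSystem D := hD
  let ρ : (Fin n → ℤ) → (Fin n → ℝ) := fun d i => (d i : ℝ)
  have hunion : ∀ T : Set (Fin n → ℝ),
      ⋃ d ∈ D, (fun x => x + fun i => ((d i : ℝ))) '' T = T + ρ '' D :=
    fun T => by rw [← iUnion_add_right_image, biUnion_image]
  simp_rw [hunion]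
  exact hB.existsUnique_nonempty_isCompact_image_mulVec_eq_add ((hD'.finite hA).image ρ)
    (hD'.nonempty.image ρ)
end

section
/- Let n ≥ 2 and let M ⊂ ℝⁿ be a ℤⁿ-tile whose interior is connected. Then ∂M has no separating point: for every x ∈ ∂M, the set ∂M \ {x} is connected. -/
open Set

/-- The real vector obtained from an integer vector. -/
def intVecToReal {n : ℕ} (z : Fin n → ℤ) : Fin n → ℝ := fun i => (z i : ℝ)

/-- `M` is a `ℤⁿ`-tile: compact, closure of its interior, boundary of Lebesgue measure
zero, and its `ℤⁿ`-translates cover `ℝⁿ` with pairwise disjoint interiors. -/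
def IsZnTile {n : ℕ} (M : Set (Fin n → ℝ)) : Prop :=
  IsCompact M ∧ M = closure (interior M) ∧
  MeasureTheory.volume (frontier M) = 0 ∧
  (⋃ z : Fin n → ℤ, (fun x => x + intVecToReal z) '' M) = Set.univ ∧
  Pairwise fun z z' : Fin n → ℤ =>
    Disjoint (interior ((fun x => x + intVecToReal z) '' M))
      (interior ((fun x => x + intVecToReal z') '' M))

/-!
`Mᶜ` is connected: a bounded component `W` of `Mᶜ` would contain, by the tiling and the null
boundary, the interior of a translate `M + v` with `v ∈ ℤⁿ \ {0}`, so `M + v ⊆ closure W`. As a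
bounded complementary component lies in every ball containing the set, every ball containing `M`
would contain `M + v`, hence `M + kv` for all `k`, which is absurd.

In place of Alexander duality we use that `ℝⁿ` is unicoherent (being simply connected, every
nonvanishing map to `ℂ` has a continuous logarithm): the inversion at `x ∈ ∂M` carries
`M \ {x}` and `(interior M)ᶜ` to two closed connected sets covering `ℝⁿ` that meet exactly in the
image of `∂M \ {x}`.
-/

open Topology Filter Bornology Metric Complex
open scoped Real

section Unicoherence

variable {X : Type*} [TopologicalSpace X]

theorem exists_continuous_exp_eq [SimplyConnectedSpace X] [LocallyPathConnectedSpace X]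
    {g : X → ℂ} (hg : Continuous g) (hg₀ : ∀ x, g x ≠ 0) :
    ∃ h : X → ℂ, Continuous h ∧ ∀ x, exp (h x) = g x := by
  obtain ⟨x₀⟩ := (inferInstance : Nonempty X)
  obtain ⟨h, ⟨-, hh⟩, -⟩ := isCoveringMapOn_exp.existsUnique_continuousMap_lifts ⟨g, hg⟩
    (a₀ := x₀) (exp_log (hg₀ x₀)) hg₀
  exact ⟨h, h.continuous, congrFun hh⟩

theorem IsPreconnected.eq_of_exp_eq_one {S : Set X} (hS : IsPreconnected S) {φ : X → ℂ}
    (hφ : ContinuousOn φ S) (h₁ : ∀ x ∈ S, exp (φ x) = 1) {a b : X} (ha : a ∈ S) (hb : b ∈ S) :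
    φ a = φ b :=
  have : DiscreteTopology (exp ⁻¹' {1}) :=
    (isCoveringMapOn_exp 1 one_ne_zero).discreteTopology_fiber
  hS.constant_of_mapsTo (isDiscrete_iff_discreteTopology.2 this) hφ h₁ ha hb

theorem exp_neg_eq_of_exp_two_mul_eq_one {z : ℂ} (h : exp (2 * z) = 1) : exp (-z) = exp z := by
  rw [← mul_one (exp (-z)), ← h, ← exp_add]; ring_nf

/-- A simply connected, locally path-connected normal space is unicoherent. -/
theorem isPreconnected_inter_of_union_eq_univ [SimplyConnectedSpace X]
    [LocallyPathConnectedSpace X] [NormalSpace X] {A B : Set X} (hAc : IsClosed A)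
    (hBc : IsClosed B) (hA : IsPreconnected A) (hB : IsPreconnected B) (hAB : A ∪ B = univ) :
    IsPreconnected (A ∩ B) := by
  classical
  refine (isPreconnected_iff_subset_of_fully_disjoint_closed (hAc.inter hBc)).2
    fun u v hu hv huv hdisj => ?_
  by_contra! hne
  obtain ⟨a, ha, hav⟩ := not_subset.1 hne.2
  obtain ⟨b, hb, hbu⟩ := not_subset.1 hne.1
  have hau : a ∈ u := (huv ha).resolve_right hav
  have hbv : b ∈ v := (huv hb).resolve_left hbu
  obtain ⟨f, hf₀, hf₁, -⟩ := exists_continuous_zero_one_of_isClosed hu hv hdisj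
  set θ : X → ℂ := fun y => π * I * f y
  have hθa : θ a = 0 := by simp [θ, hf₀ hau]
  have hθb : θ b = π * I := by simp [θ, hf₁ hbv]
  have hθ_AB : ∀ y ∈ A ∩ B, exp (2 * θ y) = 1 := by
    intro y hy
    rcases huv hy with hyu | hyv
    · simp [θ, hf₀ hyu]
    · have : f y = 1 := hf₁ hyv
      simp only [θ, this]
      exact exp_eq_one_iff.2 ⟨1, by push_cast; ring⟩
  have hBA : Aᶜ ⊆ B := fun z hz => (hAB.symm ▸ mem_univ z : z ∈ A ∪ B).resolve_left hz
  -- `exp θ` and `exp (-θ)` agree on `A ∩ B`, so they glue to a continuous `g`. For a logarithm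
  -- `h` of `g`, `h - θ` is constant on `A` and `h + θ` on `B`, while `θ` jumps by `π i`.
  have hθ : Continuous θ := by fun_prop
  set g : X → ℂ := fun y => if y ∈ A then exp (θ y) else exp (-θ y)
  have hg : Continuous g := by
    refine continuous_if (fun y hy => ?_) (by fun_prop) (by fun_prop)
    replace hy : y ∈ frontier A := hy
    rw [frontier_eq_closure_inter_closure, hAc.closure_eq] at hy
    exact (exp_neg_eq_of_exp_two_mul_eq_one
      (hθ_AB y ⟨hy.1, hBc.closure_subset_iff.2 hBA hy.2⟩)).symm
  obtain ⟨h, hh, hhg⟩ := exists_continuous_exp_eq hg fun y => by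
    simp only [g]; split_ifs <;> exact exp_ne_zero _
  have hA_eq : h a - θ a = h b - θ b := by
    refine hA.eq_of_exp_eq_one (hh.sub hθ).continuousOn (fun y hy => ?_) ha.1 hb.1
    simp [exp_sub, hhg, g, hy]
  have hB_eq : h a + θ a = h b + θ b := by
    refine hB.eq_of_exp_eq_one (hh.add hθ).continuousOn (fun y hy => ?_) ha.2 hb.2
    change exp (h y + θ y) = 1
    rw [exp_add, hhg]
    by_cases hyA : y ∈ A
    · simp only [g, if_pos hyA, ← exp_add, ← two_mul]
      exact hθ_AB y ⟨hyA, hy⟩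
    · simp only [g, if_neg hyA, ← exp_add, neg_add_cancel, exp_zero]
  rw [hθa, hθb] at hA_eq hB_eq
  have : (2 * π * I : ℂ) = 0 := by linear_combination hA_eq - hB_eq
  simp [Real.pi_ne_zero, I_ne_zero] at this

end Unicoherence

section NormedSpace

variable {E : Type*} [NormedAddCommGroup E] [NormedSpace ℝ E]

/-- Inversion in the unit sphere about `c`; the junk value `0⁻¹ = 0` makes it fix `c`, so that
it is an involution of all of `E`. -/
noncomputable def unitInversion (c y : E) : E := c + (‖y - c‖ ^ 2)⁻¹ • (y - c)

@[simp]
theorem unitInversion_self (c : E) : unitInversion c c = c := by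
  simp [unitInversion]

theorem norm_unitInversion_sub (c y : E) : ‖unitInversion c y - c‖ = ‖y - c‖⁻¹ := by
  rw [unitInversion, add_sub_cancel_left, norm_smul, norm_inv, norm_pow, norm_norm]
  rcases eq_or_ne ‖y - c‖ 0 with h | h
  · simp [h]
  · field_simp

theorem unitInversion_eq_self_iff {c y : E} : unitInversion c y = c ↔ y = c := by
  rw [← sub_eq_zero, ← norm_eq_zero, norm_unitInversion_sub, inv_eq_zero, norm_eq_zero,
    sub_eq_zero]

theorem unitInversion_involutive (c : E) : Function.Involutive (unitInversion c) := by
  intro y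
  rcases eq_or_ne y c with rfl | h
  · simp
  have h₀ : ‖y - c‖ ≠ 0 := by simpa [sub_eq_zero] using h
  rw [unitInversion, norm_unitInversion_sub, unitInversion, add_sub_cancel_left, smul_smul]
  field_simp
  simp

theorem continuousAt_unitInversion {c y : E} (h : y ≠ c) : ContinuousAt (unitInversion c) y := by
  have : ‖y - c‖ ^ 2 ≠ 0 := by simpa [sub_eq_zero] using h
  unfold unitInversion
  exact continuousAt_const.add (((continuousAt_id.sub continuousAt_const).norm.pow 2).inv₀ this
    |>.smul (continuousAt_id.sub continuousAt_const))

theorem continuousOn_unitInversion (c : E) : ContinuousOn (unitInversion c) {c}ᶜ :=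
  fun _ h => (continuousAt_unitInversion h).continuousWithinAt

theorem tendsto_unitInversion_cobounded (c : E) :
    Tendsto (unitInversion c) (cobounded E) (𝓝 c) := by
  rw [tendsto_iff_norm_sub_tendsto_zero]
  simp only [norm_unitInversion_sub]
  exact tendsto_inv_atTop_zero.comp
    (tendsto_norm_cobounded_atTop.comp (tendsto_sub_const_cobounded c))

theorem IsPreconnected.image_unitInversion {x : E} {S : Set E} (hS : IsPreconnected S)
    (hx : x ∉ S) : IsPreconnected (unitInversion x '' S) :=
  hS.image _ ((continuousOn_unitInversion x).mono fun _ hy hyx => hx (hyx ▸ hy))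

theorem isPreconnected_image_unitInversion [Nontrivial E] {x : E} {T : Set E}
    (hT : IsPreconnected (T \ {x})) (hTb : IsBounded Tᶜ) :
    IsPreconnected (unitInversion x '' T) := by
  refine (hT.image_unitInversion fun h => h.2 rfl).subset_closure (image_mono sdiff_subset)
    fun y ⟨z, hz, hzy⟩ => ?_
  rcases eq_or_ne z x with rfl | hzx
  · rw [← hzy, unitInversion_self]
    refine mem_closure_of_tendsto (tendsto_unitInversion_cobounded z) ?_
    filter_upwards [isBounded_compl_iff.1 hTb, isBounded_def.1 (isBounded_singleton (x := z))]
      with w hwT hwz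
    exact mem_image_of_mem _ ⟨hwT, hwz⟩
  · exact subset_closure ⟨z, ⟨hz, hzx⟩, hzy⟩

theorem isClosed_preimage_unitInversion_sdiff {M : Set E} (hMb : IsBounded M) (hMc : IsClosed M)
    (x : E) : IsClosed (unitInversion x ⁻¹' (M \ {x})) := by
  obtain ⟨D, hD, hMD⟩ := hMb.subset_closedBall_lt 0 x
  have hfar : ∀ y, D⁻¹ ≤ ‖y - x‖ → y ≠ x := fun y hy hyx => by
    simp [hyx] at hy
    linarith [inv_pos.2 hD]
  have : unitInversion x ⁻¹' (M \ {x}) = {y | D⁻¹ ≤ ‖y - x‖} ∩ unitInversion x ⁻¹' M := by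
    ext y
    simp only [mem_preimage, Set.mem_sdiff, mem_singleton_iff, unitInversion_eq_self_iff,
      mem_inter_iff, mem_ofPred_eq]
    refine ⟨fun ⟨hyM, hyx⟩ => ⟨?_, hyM⟩, fun ⟨hy, hyM⟩ => ⟨hyM, hfar y hy⟩⟩
    have := mem_closedBall_iff_norm.1 (hMD hyM)
    rw [norm_unitInversion_sub] at this
    exact (inv_le_comm₀ (norm_pos_iff.2 (sub_ne_zero.2 hyx)) hD).1 this
  rw [this]
  exact ((continuousOn_unitInversion x).mono hfar).preimage_isClosed_of_isClosed
    (isClosed_le continuous_const (continuous_id.sub continuous_const).norm) hMc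

theorem isClosed_preimage_unitInversion_compl {U : Set E} (hU : IsOpen U) {x : E} (hx : x ∉ U) :
    IsClosed (unitInversion x ⁻¹' Uᶜ) := by
  have : unitInversion x ⁻¹' U ⊆ {x}ᶜ := by
    rintro y hy rfl
    exact hx (by simpa using hy)
  rw [preimage_compl, isClosed_compl_iff, ← inter_eq_right.2 this]
  exact (continuousOn_unitInversion x).isOpen_inter_preimage isOpen_compl_singleton hU

theorem isPreconnected_frontier_diff_singleton [Nontrivial E] {M : Set E} (hMb : IsBounded M)
    (hM : closure (interior M) = M) (hint : IsPreconnected (interior M))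
    (hext : IsPreconnected Mᶜ) {x : E} (hx : x ∈ frontier M) :
    IsPreconnected (frontier M \ {x}) := by
  have hMc : IsClosed M := hM ▸ isClosed_closure
  have hxi : x ∉ interior M := hx.2
  have hι := unitInversion_involutive x
  -- On `E ∪ {∞}` the inversion swaps `x` and `∞`; `A` and `B` are the images of `M` and of
  -- `closure Mᶜ ∪ {∞}`.
  set A := unitInversion x '' (M \ {x}) with hA_def
  set B := unitInversion x '' (interior M)ᶜ with hB_def
  have hsub : interior M ⊆ M \ {x} := fun y hy => ⟨interior_subset hy, fun hyx => hxi (hyx ▸ hy)⟩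
  have hA : IsPreconnected A :=
    (hint.subset_closure hsub (sdiff_subset.trans hM.ge)).image_unitInversion fun h => h.2 rfl
  have hB : IsPreconnected B := by
    refine isPreconnected_image_unitInversion (hext.subset_closure (fun y hy => ⟨?_, ?_⟩)
      (closure_compl (s := M) ▸ sdiff_subset)) (by simpa using hMb.subset interior_subset)
    · exact fun h => hy (interior_subset h)
    · exact fun hyx => hy ((mem_singleton_iff.1 hyx).symm ▸ hMc.frontier_subset hx)
  have hAc : IsClosed A := by
    rw [hA_def, hι.image_eq_preimage_symm]
    exact isClosed_preimage_unitInversion_sdiff hMb hMc x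
  have hBc : IsClosed B := by
    rw [hB_def, hι.image_eq_preimage_symm]
    exact isClosed_preimage_unitInversion_compl isOpen_interior hxi
  have hAB : A ∪ B = univ := by
    rw [← image_union, compl_subset_iff_union.1 (compl_subset_compl.2 hsub),
      image_univ_of_surjective hι.surjective]
  have hAB_eq : A ∩ B = unitInversion x '' (frontier M \ {x}) := by
    rw [← image_inter hι.injective, hMc.frontier_eq]
    congr 1
    ext y
    simp only [Set.mem_sdiff, mem_inter_iff, mem_compl_iff]
    tauto
  have := (isPreconnected_inter_of_union_eq_univ hAc hBc hA hB hAB).image_unitInversion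
    fun ⟨⟨y, hy, hyx⟩, _⟩ => hy.2 (unitInversion_eq_self_iff.1 hyx)
  rwa [hAB_eq, image_image, funext hι, image_id'] at this

theorem isConnected_compl_closedBall (h : 1 < Module.rank ℝ E) (c : E) {r : ℝ} (hr : 0 ≤ r) :
    IsConnected (closedBall c r)ᶜ := by
  have : (closedBall c r)ᶜ = (fun p : E × ℝ => c + p.2 • p.1) '' (sphere 0 1 ×ˢ Ioi r) := by
    ext y
    simp only [mem_compl_iff, mem_closedBall, not_le, mem_image, mem_prod, mem_sphere_zero_iff_norm,
      mem_Ioi, Prod.exists]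
    constructor
    · intro hy
      have hy₀ : ‖y - c‖ ≠ 0 := (hr.trans_lt (dist_eq_norm y c ▸ hy)).ne'
      refine ⟨‖y - c‖⁻¹ • (y - c), ‖y - c‖, ⟨?_, ?_⟩, ?_⟩
      · rw [norm_smul, norm_inv, norm_norm, inv_mul_cancel₀ hy₀]
      · rwa [← dist_eq_norm]
      · rw [smul_smul, mul_inv_cancel₀ hy₀, one_smul, add_sub_cancel]
    · rintro ⟨u, t, ⟨hu, ht⟩, rfl⟩
      rw [dist_eq_norm, add_sub_cancel_left, norm_smul, hu, mul_one, Real.norm_eq_abs,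
        abs_of_pos (hr.trans_lt ht)]
      exact ht
  rw [this]
  exact ((isConnected_sphere h 0 zero_le_one).prod isConnected_Ioi).image _ (by fun_prop)

theorem not_isBounded_compl_closedBall [Nontrivial E] (c : E) (r : ℝ) :
    ¬IsBounded (closedBall c r)ᶜ := fun hb =>
  NormedSpace.unbounded_univ ℝ E (union_compl_self (closedBall c r) ▸ isBounded_closedBall.union hb)

theorem connectedComponentIn_compl_subset_closedBall (h : 1 < Module.rank ℝ E) {L : Set E}
    {c : E} {r : ℝ} (hr : 0 ≤ r) (hL : L ⊆ closedBall c r) {p : E}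
    (hb : IsBounded (connectedComponentIn Lᶜ p)) : connectedComponentIn Lᶜ p ⊆ closedBall c r := by
  have : Nontrivial E := rank_pos_iff_nontrivial.1 (zero_lt_one.trans h)
  intro q hq
  by_contra hqr
  refine not_isBounded_compl_closedBall c r (hb.subset ?_)
  rw [connectedComponentIn_eq hq]
  exact (isConnected_compl_closedBall h c hr).isPreconnected.subset_connectedComponentIn hqr
    (compl_subset_compl.2 hL)

theorem isConnected_compl_of_not_isBounded_connectedComponentIn (h : 1 < Module.rank ℝ E)
    {L : Set E} (hL : IsBounded L) (hcomp : ∀ p ∉ L, ¬IsBounded (connectedComponentIn Lᶜ p)) :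
    IsConnected Lᶜ := by
  obtain ⟨r, hr, hLr⟩ := hL.subset_closedBall_lt 0 0
  have hext := isConnected_compl_closedBall h (0 : E) hr.le
  obtain ⟨e, he⟩ := hext.nonempty
  have heL : e ∈ Lᶜ := fun h => he (hLr h)
  suffices Lᶜ ⊆ connectedComponentIn Lᶜ e by
    rw [← (connectedComponentIn_subset _ _).antisymm this]
    exact isConnected_connectedComponentIn_iff.2 heL
  intro p hp
  obtain ⟨q, hq, hqr⟩ := not_subset.1 fun hsub => hcomp p hp (isBounded_closedBall.subset hsub)
  have : (closedBall 0 r)ᶜ ⊆ connectedComponentIn Lᶜ q :=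
    hext.isPreconnected.subset_connectedComponentIn hqr (compl_subset_compl.2 hLr)
  rw [← connectedComponentIn_eq hq] at this
  rw [← connectedComponentIn_eq (this he)]
  exact mem_connectedComponentIn hp

theorem not_isBounded_of_forall_sub_mem {S : Set E} (hS : S.Nonempty) {v : E} (hv : v ≠ 0)
    (h : ∀ a ∈ S, a - v ∈ S) : ¬IsBounded S := by
  obtain ⟨a, ha⟩ := hS
  have hk : ∀ k : ℕ, a - (k : ℝ) • v ∈ S := by
    intro k
    induction k with
    | zero => simpa using ha
    | succ k ih => simpa [add_smul, sub_add_eq_sub_sub] using h _ ih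
  rintro hb
  obtain ⟨C, hC⟩ := isBounded_iff_forall_norm_le.1 hb
  obtain ⟨k, hk'⟩ := exists_nat_gt (2 * C / ‖v‖)
  have : (k : ℝ) * ‖v‖ ≤ 2 * C := by
    calc (k : ℝ) * ‖v‖ = ‖a - (a - (k : ℝ) • v)‖ := by
          rw [sub_sub_cancel, norm_smul, Real.norm_natCast]
      _ ≤ ‖a‖ + ‖a - (k : ℝ) • v‖ := norm_sub_le _ _
      _ ≤ 2 * C := by linarith [hC a ha, hC _ (hk k)]
  rw [div_lt_iff₀ (norm_pos_iff.2 hv)] at hk'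
  linarith

theorem nonempty_frontier_diff_singleton (h : 1 < Module.rank ℝ E) {M : Set E}
    (hint : (interior M).Nonempty) (hext : (closure M)ᶜ.Nonempty) {x : E} (hx : x ∈ frontier M) :
    (frontier M \ {x}).Nonempty := by
  by_contra hempty
  rw [not_nonempty_iff_eq_empty, Set.sdiff_eq_empty] at hempty
  obtain ⟨p, hp⟩ := hint
  obtain ⟨q, hq⟩ := hext
  have hcover : {x}ᶜ ⊆ interior M ∪ (closure M)ᶜ := fun y hy => by
    by_contra hy'
    simp only [mem_union, mem_compl_iff, not_or, not_not] at hy'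
    exact hy (hempty ⟨hy'.2, hy'.1⟩)
  obtain ⟨y, -, hyi, hyc⟩ := (isConnected_compl_singleton_of_one_lt_rank h x).isPreconnected _ _
    isOpen_interior isClosed_closure.isOpen_compl hcover
    ⟨p, fun hpx => hx.2 (mem_singleton_iff.1 hpx ▸ hp), hp⟩
    ⟨q, fun hqx => hq (mem_singleton_iff.1 hqx ▸ hx.1), hq⟩
  exact hyc (subset_closure (interior_subset hyi))

end NormedSpace

theorem one_lt_rank_fin_fun {n : ℕ} (hn : 2 ≤ n) : 1 < Module.rank ℝ (Fin n → ℝ) := by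
  rw [rank_fin_fun]
  exact_mod_cast hn

@[simp]
theorem intVecToReal_zero {n : ℕ} : intVecToReal (0 : Fin n → ℤ) = 0 := by
  funext i
  simp [intVecToReal]

theorem intVecToReal_injective {n : ℕ} : Function.Injective (intVecToReal (n := n)) :=
  fun _ _ h => funext fun i => by simpa [intVecToReal] using congrFun h i

namespace IsZnTile

variable {n : ℕ} {M : Set (Fin n → ℝ)}

theorem translate_zero : (fun x => x + intVecToReal (0 : Fin n → ℤ)) '' M = M := by
  simp

theorem image_translate_interior (z : Fin n → ℤ) :
    (fun x => x + intVecToReal z) '' interior M = interior ((fun x => x + intVecToReal z) '' M) :=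
  (Homeomorph.addRight (intVecToReal z)).image_interior M

theorem disjoint_interior_translate (hM : IsZnTile M) {z : Fin n → ℤ} (hz : z ≠ 0) :
    Disjoint (interior ((fun x => x + intVecToReal z) '' M)) M := by
  have : Disjoint (interior ((fun x => x + intVecToReal z) '' M))
      (interior ((fun x => x + intVecToReal 0) '' M)) := hM.2.2.2.2 hz
  rw [translate_zero] at this
  have := this.closure_right isOpen_interior
  rwa [← hM.2.1] at this

theorem volume_frontier_translate (hM : IsZnTile M) (z : Fin n → ℤ) :
    MeasureTheory.volume (frontier ((fun x => x + intVecToReal z) '' M)) = 0 := by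
  change MeasureTheory.volume (frontier (Homeomorph.addRight (intVecToReal z) '' M)) = 0
  rw [← Homeomorph.image_frontier]
  change MeasureTheory.volume ((fun x => x + intVecToReal z) '' frontier M) = 0
  rw [image_add_right, MeasureTheory.measure_preimage_add_right]
  exact hM.2.2.1

theorem exists_inter_interior_translate_nonempty (hM : IsZnTile M) {U : Set (Fin n → ℝ)}
    (hU : IsOpen U) (hne : U.Nonempty) :
    ∃ z : Fin n → ℤ, (U ∩ interior ((fun x => x + intVecToReal z) '' M)).Nonempty := by
  have hnull : MeasureTheory.volume
      (⋃ z : Fin n → ℤ, frontier ((fun x => x + intVecToReal z) '' M)) = 0 :=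
    MeasureTheory.measure_iUnion_null hM.volume_frontier_translate
  obtain ⟨p, hpU, hp⟩ := not_subset.1 fun h =>
    (hU.measure_pos _ hne).ne' (MeasureTheory.measure_mono_null h hnull)
  obtain ⟨z, hz⟩ := mem_iUnion.1 (hM.2.2.2.1 ▸ mem_univ p)
  exact ⟨z, p, hpU, by_contra fun hint => hp (mem_iUnion.2 ⟨z, subset_closure hz, hint⟩)⟩

theorem exists_translate_subset_closure_connectedComponentIn (hM : IsZnTile M)
    (hint : IsPreconnected (interior M)) {p : Fin n → ℝ} (hp : p ∉ M) :
    ∃ z ≠ 0, (fun x => x + intVecToReal z) '' M ⊆ closure (connectedComponentIn Mᶜ p) := by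
  obtain ⟨z, q, hqW, hqT⟩ := hM.exists_inter_interior_translate_nonempty
    hM.1.isClosed.isOpen_compl.connectedComponentIn ⟨p, mem_connectedComponentIn hp⟩
  have hz : z ≠ 0 := by
    rintro rfl
    rw [translate_zero] at hqT
    exact connectedComponentIn_subset _ _ hqW (interior_subset hqT)
  refine ⟨z, hz, ?_⟩
  rw [← image_translate_interior] at hqT
  have hTint : (fun x => x + intVecToReal z) '' interior M ⊆ connectedComponentIn Mᶜ p := by
    rw [connectedComponentIn_eq hqW]
    refine (hint.image _ (by fun_prop)).subset_connectedComponentIn hqT ?_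
    rw [image_translate_interior]
    exact (hM.disjoint_interior_translate hz).subset_compl_right
  calc (fun x => x + intVecToReal z) '' M
      = closure ((fun x => x + intVecToReal z) '' interior M) := by
        conv_lhs => rw [hM.2.1]
        exact (Homeomorph.addRight (intVecToReal z)).image_closure _
    _ ⊆ closure (connectedComponentIn Mᶜ p) := closure_mono hTint

theorem not_isBounded_connectedComponentIn_compl (hn : 2 ≤ n) (hM : IsZnTile M)
    (hint : IsConnected (interior M)) {p : Fin n → ℝ} (hp : p ∉ M) :
    ¬IsBounded (connectedComponentIn Mᶜ p) := by
  intro hW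
  obtain ⟨z, hz, hzW⟩ := hM.exists_translate_subset_closure_connectedComponentIn
    hint.isPreconnected hp
  obtain ⟨R, hR, hMR⟩ := hM.1.isBounded.subset_closedBall_lt 0 0
  obtain ⟨m, hm⟩ := hint.nonempty
  -- A ball of radius `R` around `a` containing `M` contains the bounded component, hence
  -- `M + v`; so the set of such centres is bounded, nonempty and stable under `· - v`.
  refine not_isBounded_of_forall_sub_mem (S := {a | M ⊆ closedBall a R}) ⟨0, hMR⟩
    (v := intVecToReal z) (intVecToReal_injective.ne_iff' intVecToReal_zero |>.2 hz) ?_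
    ((isBounded_closedBall (x := m) (r := R)).subset fun a ha => ?_)
  · intro a ha y hy
    have := (isClosed_closedBall.closure_subset_iff.2 (connectedComponentIn_compl_subset_closedBall
      (one_lt_rank_fin_fun hn) hR.le ha hW)) (hzW ⟨y, hy, rfl⟩)
    rw [mem_closedBall_iff_norm, sub_sub_eq_add_sub]
    exact this
  · rw [mem_closedBall_comm]
    exact ha (interior_subset hm)

theorem isConnected_compl (hn : 2 ≤ n) (hM : IsZnTile M) (hint : IsConnected (interior M)) :
    IsConnected Mᶜ :=
  isConnected_compl_of_not_isBounded_connectedComponentIn (one_lt_rank_fin_fun hn)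
    hM.1.isBounded fun _ hp => hM.not_isBounded_connectedComponentIn_compl hn hint hp

end IsZnTile

/-- for `n ≥ 2`, the boundary of a `ℤⁿ`-tile with connected interior has
no separating point: `∂M \ {x}` is connected for every `x ∈ ∂M`. -/
theorem boundary_of_ZnTile_no_separating_point (n : ℕ) (hn : 2 ≤ n)
    (M : Set (Fin n → ℝ)) (hM : IsZnTile M)
    (hint : IsConnected (interior M)) :
    ∀ x ∈ frontier M, IsConnected (frontier M \ {x}) := by
  intro x hx
  have hrank := one_lt_rank_fin_fun hn
  have : Nontrivial (Fin n → ℝ) := rank_pos_iff_nontrivial.1 (zero_lt_one.trans hrank)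
  have hext : IsConnected Mᶜ := hM.isConnected_compl hn hint
  refine ⟨nonempty_frontier_diff_singleton hrank hint.nonempty ?_ hx,
    isPreconnected_frontier_diff_singleton hM.1.isBounded hM.2.1.symm hint.isPreconnected
      hext.isPreconnected hx⟩
  rw [hM.1.isClosed.closure_eq]
  exact hext.nonempty
end

section
/- Let T = T(A,D) be a self-affine ℤⁿ-tile with subdivision operator P defined on its neighbor structure 𝒦(T) by P(S) = {(p+A)(S) ∈ 𝒦(T) : p ∈ D^S}, where (p+A)(s) = p(s) + A s. Then for every S ∈ 𝒦(T), the simplicial boundary satisfies δ(P(S)) = P(δ S). -/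
open Set Matrix

/-- The real matrix obtained from an integer matrix. -/
def intMatToReal {n : ℕ} (A : Matrix (Fin n) (Fin n) ℤ) : Matrix (Fin n) (Fin n) ℝ :=
  A.map (Int.cast : ℤ → ℝ)

/-- The cell `⟨S⟩ = ⋂_{s∈S} (T+s)`. -/
def cellOf {n : ℕ} (T : Set (Fin n → ℝ)) (S : Set (Fin n → ℤ)) : Set (Fin n → ℝ) :=
  ⋂ s ∈ S, (fun x => x + intVecToReal s) '' T

/-- The neighbor structure `𝒦(T)`: nonempty `S ⊆ ℤⁿ` with `⟨S⟩ ≠ ∅`. -/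
def neighborStructure {n : ℕ} (T : Set (Fin n → ℝ)) : Set (Set (Fin n → ℤ)) :=
  {S | S.Nonempty ∧ (cellOf T S).Nonempty}

/-- The subdivision operator `P(S) = {(p+A)(S) ∈ 𝒦(T) ∣ p ∈ D^S}`. -/
def subdivOp {n : ℕ} (A : Matrix (Fin n) (Fin n) ℤ) (D : Set (Fin n → ℤ))
    (T : Set (Fin n → ℝ)) (S : Set (Fin n → ℤ)) : Set (Set (Fin n → ℤ)) :=
  {S' | S' ∈ neighborStructure T ∧ ∃ p : (Fin n → ℤ) → (Fin n → ℤ),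
    (∀ s ∈ S, p s ∈ D) ∧ S' = (fun s => p s + A.mulVec s) '' S}

/-- The simplicial boundary `δS = {S ∪ {x} ∣ x ∈ ℤⁿ \ S} ∩ 𝒦(T)` of a cell. -/
def deltaCell {n : ℕ} (T : Set (Fin n → ℝ)) (S : Set (Fin n → ℤ)) :
    Set (Set (Fin n → ℤ)) :=
  {S' | S' ∈ neighborStructure T ∧ ∃ x ∉ S, S' = S ∪ {x}}

/-- The simplicial boundary of a collection of cells. -/
def deltaColl {n : ℕ} (T : Set (Fin n → ℝ)) (𝒞 : Set (Set (Fin n → ℤ))) :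
    Set (Set (Fin n → ℤ)) :=
  {S' | S' ∈ neighborStructure T ∧
    ∃ S ∈ 𝒞, ∃ x, x ∉ (⋃ S'' ∈ 𝒞, S'') ∧ S' = S ∪ {x}}

/-- The subdivision operator extended to collections. -/
def subdivColl {n : ℕ} (A : Matrix (Fin n) (Fin n) ℤ) (D : Set (Fin n → ℤ))
    (T : Set (Fin n → ℝ)) (𝒞 : Set (Set (Fin n → ℤ))) : Set (Set (Fin n → ℤ)) :=
  {S' | ∃ S ∈ 𝒞, S' ∈ subdivOp A D T S}

open Function

/-! Both inclusions rest on the unique digit expansion `z = d + A y` (`d ∈ D`) of `ℤⁿ = D ⊕ Aℤⁿ`.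
A cell of `δ(P(S))` is `(p + A)(S) ∪ {y}` with `y = d + A x`; redefining the digit of `x` to be `d`
exhibits it as a subdivision of `S ∪ {x}`, and `x ∉ S` because otherwise this redefinition would
put `y` into a cell of `P(S)`. Conversely, the extra vertex `p x + A x` of a subdivision of
`S ∪ {x}` lies in no cell `(r + A)(S)`: uniqueness of digits and injectivity of `A` would force
`x ∈ S`. -/

lemma image_subset_image_union_singleton {α β : Type*} {f g : α → β} {a : α} {S : Set α}
    (h : ∀ s ≠ a, f s = g s) : f '' S ⊆ g '' S ∪ {f a} := by
  rintro _ ⟨s, hs, rfl⟩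
  by_cases hsa : s = a
  · exact Or.inr (hsa ▸ rfl)
  · exact Or.inl ⟨s, hs, (h s hsa).symm⟩

lemma image_union_singleton_of_notMem {α β : Type*} {f g : α → β} {a : α} {S : Set α}
    (ha : a ∉ S) (h : ∀ s ≠ a, f s = g s) :
    f '' (S ∪ {a}) = g '' S ∪ {f a} := by
  rw [image_union, image_singleton, image_congr fun s hs => h s (ne_of_mem_of_not_mem hs ha)]

lemma det_ne_zero_of_one_lt_norm_roots {n : ℕ} {A : Matrix (Fin n) (Fin n) ℤ}
    (hexp : ∀ μ ∈ (A.map (Int.cast : ℤ → ℂ)).charpoly.roots, 1 < ‖μ‖) : A.det ≠ 0 := by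
  have hC : (A.map (Int.cast : ℤ → ℂ)).det ≠ 0 := by
    rw [det_eq_prod_roots_charpoly]
    exact Multiset.prod_ne_zero fun h0 => absurd (hexp 0 h0) (by simp)
  rw [← Int.cast_det] at hC
  exact_mod_cast hC

section Tile

variable {n : ℕ} {A : Matrix (Fin n) (Fin n) ℤ} {D : Set (Fin n → ℤ)} {T : Set (Fin n → ℝ)}
  {S : Set (Fin n → ℤ)}

lemma intMatToReal_mulVec_injective (hdet : A.det ≠ 0) :
    Injective (intMatToReal A).mulVec := by
  refine mulVec_injective_of_det_ne_zero ?_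
  rw [intMatToReal, ← Int.cast_det]
  exact_mod_cast hdet

lemma intVecToReal_add (a b : Fin n → ℤ) :
    intVecToReal (a + b) = intVecToReal a + intVecToReal b := by
  funext i
  simp [intVecToReal]

lemma intVecToReal_mulVec (A : Matrix (Fin n) (Fin n) ℤ) (v : Fin n → ℤ) :
    intVecToReal (A *ᵥ v) = intMatToReal A *ᵥ intVecToReal v := by
  funext i
  exact RingHom.map_mulVec (Int.castRingHom ℝ) A v i

lemma cellOf_antitone (T : Set (Fin n → ℝ)) : Antitone (cellOf T) :=
  fun _ _ h => biInter_subset_biInter_left h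

lemma mem_neighborStructure_of_subset {S₁ S₂ : Set (Fin n → ℤ)} (h : S₁ ⊆ S₂)
    (hne : S₁.Nonempty) (hS₂ : S₂ ∈ neighborStructure T) : S₁ ∈ neighborStructure T :=
  ⟨hne, hS₂.2.mono (cellOf_antitone T h)⟩

/-- A point of `⟨(q + A)(S)⟩` is `A w` with `w ∈ T + s` for every `s ∈ S`, by the set equation
`A T = T + D`; injectivity of `A` makes `w` independent of `s`. -/
lemma cellOf_nonempty_of_digit_image (hA : Injective (intMatToReal A).mulVec)
    (hTset : (fun x => (intMatToReal A).mulVec x) '' T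
      = ⋃ d ∈ D, (fun x => x + intVecToReal d) '' T)
    {q : (Fin n → ℤ) → (Fin n → ℤ)} (hq : ∀ s ∈ S, q s ∈ D)
    (h : (cellOf T ((fun s => q s + A *ᵥ s) '' S)).Nonempty) : (cellOf T S).Nonempty := by
  obtain ⟨z, hz⟩ := h
  have hpre : ∀ s ∈ S, ∃ w ∈ (fun x => x + intVecToReal s) '' T, intMatToReal A *ᵥ w = z := by
    intro s hs
    obtain ⟨t, ht, rfl⟩ := mem_iInter₂.mp hz _ (mem_image_of_mem _ hs)
    obtain ⟨u, hu, hAu⟩ : t + intVecToReal (q s) ∈ (fun x => intMatToReal A *ᵥ x) '' T :=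
      hTset ▸ mem_biUnion (hq s hs) ⟨t, ht, rfl⟩
    refine ⟨u + intVecToReal s, ⟨u, hu, rfl⟩, ?_⟩
    dsimp only at hAu ⊢
    rw [mulVec_add, hAu, ← intVecToReal_mulVec, intVecToReal_add]
    abel
  rcases S.eq_empty_or_nonempty with rfl | ⟨s₀, hs₀⟩
  · simp [cellOf]
  obtain ⟨w, -, hw⟩ := hpre s₀ hs₀
  refine ⟨w, mem_iInter₂.mpr fun s hs => ?_⟩
  obtain ⟨w', hw', hw'z⟩ := hpre s hs
  exact hA (hw'z.trans hw.symm) ▸ hw'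

lemma digit_eq_of_add_mulVec_eq
    (hD : ∀ z : Fin n → ℤ, ∃! d, d ∈ D ∧ ∃ y : Fin n → ℤ, z = d + A *ᵥ y)
    (hA : Injective A.mulVec) {d d' x x' : Fin n → ℤ} (hd : d ∈ D) (hd' : d' ∈ D)
    (h : d + A *ᵥ x = d' + A *ᵥ x') : d = d' ∧ x = x' := by
  obtain rfl := (hD _).unique ⟨hd, x, rfl⟩ ⟨hd', x', h⟩
  exact ⟨rfl, hA (add_left_cancel h)⟩

lemma deltaColl_subdivOp_subset (hD : ∀ z : Fin n → ℤ, ∃ d ∈ D, ∃ y : Fin n → ℤ, z = d + A *ᵥ y)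
    (hA : Injective (intMatToReal A).mulVec)
    (hTset : (fun x => (intMatToReal A).mulVec x) '' T
      = ⋃ d ∈ D, (fun x => x + intVecToReal d) '' T)
    (hS : S.Nonempty) : deltaColl T (subdivOp A D T S) ⊆ subdivColl A D T (deltaCell T S) := by
  rintro _ ⟨hK, _, ⟨-, p, hp, rfl⟩, y, hy, rfl⟩
  obtain ⟨d, hd, x, rfl⟩ := hD y
  set q := update p x d
  have hqx : q x + A *ᵥ x = d + A *ᵥ x := by simp [q]
  have hqp : ∀ s ≠ x, q s + A *ᵥ s = p s + A *ᵥ s := fun s hs => by simp [q, update_of_ne hs]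
  have hqD : ∀ s ∈ S ∪ {x}, q s ∈ D := by
    intro s hs
    rcases eq_or_ne s x with rfl | hsx
    · simpa [q] using hd
    · simpa [q, update_of_ne hsx] using hp s (hs.resolve_right hsx)
  have hx : x ∉ S := by
    intro hxS
    have hsub := image_subset_image_union_singleton (S := S) hqp
    rw [hqx] at hsub
    exact hy (mem_biUnion ⟨mem_neighborStructure_of_subset hsub (hS.image _) hK, q,
      fun s hs => hqD s (Or.inl hs), rfl⟩ ⟨x, hxS, hqx⟩)
  have himg := image_union_singleton_of_notMem hx hqp
  rw [hqx] at himg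
  refine ⟨S ∪ {x}, ⟨⟨hS.inl, ?_⟩, x, hx, rfl⟩, hK, q, hqD, himg.symm⟩
  exact cellOf_nonempty_of_digit_image hA hTset hqD (himg ▸ hK.2)

lemma subdivColl_deltaCell_subset
    (hD : ∀ z : Fin n → ℤ, ∃! d, d ∈ D ∧ ∃ y : Fin n → ℤ, z = d + A *ᵥ y)
    (hA : Injective A.mulVec) (hS : S.Nonempty) :
    subdivColl A D T (deltaCell T S) ⊆ deltaColl T (subdivOp A D T S) := by
  rintro _ ⟨_, ⟨-, x, hx, rfl⟩, hK, p, hp, rfl⟩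
  have himg : (fun s => p s + A *ᵥ s) '' (S ∪ {x})
      = (fun s => p s + A *ᵥ s) '' S ∪ {p x + A *ᵥ x} := by
    rw [image_union, image_singleton]
  refine ⟨hK, _, ⟨mem_neighborStructure_of_subset (himg ▸ subset_union_left) (hS.image _) hK,
    p, fun s hs => hp s (Or.inl hs), rfl⟩, p x + A *ᵥ x, ?_, himg⟩
  simp only [mem_iUnion₂, not_exists]
  rintro _ ⟨-, r, hr, rfl⟩ ⟨s, hs, hsx⟩
  exact hx ((digit_eq_of_add_mulVec_eq hD hA (hr s hs) (hp x (Or.inr rfl)) hsx).2 ▸ hs)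

end Tile

theorem delta_subdiv_comm_general (n : ℕ) (A : Matrix (Fin n) (Fin n) ℤ)
    (hexp : ∀ μ ∈ (A.map (Int.cast : ℤ → ℂ)).charpoly.roots, 1 < ‖μ‖)
    (D : Set (Fin n → ℤ))
    (hD : ∀ z : Fin n → ℤ, ∃! d, d ∈ D ∧ ∃ y : Fin n → ℤ, z = d + A.mulVec y)
    (T : Set (Fin n → ℝ))
    (hTset : (fun x => (intMatToReal A).mulVec x) '' T
      = ⋃ d ∈ D, (fun x => x + intVecToReal d) '' T)
    (S : Set (Fin n → ℤ)) (hS : S ∈ neighborStructure T) :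
    deltaColl T (subdivOp A D T S) = subdivColl A D T (deltaCell T S) := by
  have hdet := det_ne_zero_of_one_lt_norm_roots hexp
  exact Subset.antisymm
    (deltaColl_subdivOp_subset (fun z => (hD z).exists) (intMatToReal_mulVec_injective hdet)
      hTset hS.1)
    (subdivColl_deltaCell_subset hD (mulVec_injective_of_det_ne_zero hdet) hS.1)

/-- `δ(P(S)) = P(δS)` for every `S` in the neighbor structure of a
self-affine `ℤⁿ`-tile. -/
theorem delta_subdiv_comm (n : ℕ) (A : Matrix (Fin n) (Fin n) ℤ)
    (hexp : ∀ μ ∈ (A.map (Int.cast : ℤ → ℂ)).charpoly.roots, 1 < ‖μ‖)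
    (D : Set (Fin n → ℤ))
    (hD : ∀ z : Fin n → ℤ, ∃! d, d ∈ D ∧ ∃ y : Fin n → ℤ, z = d + A.mulVec y)
    (T : Set (Fin n → ℝ)) (hTne : T.Nonempty) (hTc : IsCompact T)
    (hTset : (fun x => (intMatToReal A).mulVec x) '' T
      = ⋃ d ∈ D, (fun x => x + intVecToReal d) '' T)
    (S : Set (Fin n → ℤ)) (hS : S ∈ neighborStructure T) :
    deltaColl T (subdivOp A D T S) = subdivColl A D T (deltaCell T S) :=
  delta_subdiv_comm_general n A hexp D hD T hTset S hS
end
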